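/- arXiv:1509.00893 — 4 statements merged into one kernel-verified Lean document; each statement's English description precedes it below -/
import Mathlib

section
/- The map z ↦ ℂ·(z,1) is a bijection from the upper half plane ℍ onto the set of one-dimensional ℂ-subspaces L of ℂ² with the property that every nonzero vector (v₁,v₂) ∈ L satisfies Im(v₁·conj(v₂)) > 0. Moreover, for every z ∈ ℍ one has the internal direct sum decomposition ℂ² = ℂ·(z,1) ⊕ ℂ·(conj(z),1). -/
/-!
For `c ≠ 0` the vector `c • (z, 1)` has `Im (v₁ * conj v₂) = |c|² * Im z`, so the line
`ℂ·(z, 1)` satisfies the positivity condition exactly when `Im z > 0`. Conversely a line with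
the positivity condition is spanned by some `(a, b)` with `Im (a * conj b) > 0`, which forces
`b ≠ 0`, and then it is the line `ℂ·(a / b, 1)`. Finally `(z, 1)` and `(conj z, 1)` are
linearly independent in `ℂ²` since `z ≠ conj z` when `Im z > 0`.
-/

open Submodule Complex ComplexConjugate

section Field

variable {K : Type*} [Field K]

theorem span_singleton_mk_one_injective :
    Function.Injective fun z : K => K ∙ ((z, 1) : K × K) := by
  intro z w h
  obtain ⟨u, hu⟩ := span_singleton_eq_span_singleton.mp h
  simp only [Units.smul_def, Prod.smul_mk, smul_eq_mul, mul_one, Prod.mk.injEq] at hu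
  simpa [hu.2] using hu.1

theorem span_singleton_mk_eq_span_singleton_div_one {a b : K} (hb : b ≠ 0) :
    K ∙ ((a, b) : K × K) = K ∙ ((a / b, 1) : K × K) := by
  rw [← span_singleton_smul_eq (isUnit_iff_ne_zero.mpr hb) ((a / b, 1) : K × K)]
  simp [mul_div_cancel₀ a hb]

theorem isCompl_span_singleton_mk_one {z w : K} (h : z ≠ w) :
    IsCompl (K ∙ ((z, 1) : K × K)) (K ∙ ((w, 1) : K × K)) := by
  have hli : LinearIndependent K ![((z, 1) : K × K), (w, 1)] := by
    refine (LinearIndependent.pair_iff' (by simp)).mpr fun a ha => h ?_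
    simp only [Prod.smul_mk, smul_eq_mul, mul_one, Prod.mk.injEq] at ha
    simpa [ha.2] using ha.1
  have hspan : span K (Set.range ![((z, 1) : K × K), (w, 1)]) = ⊤ :=
    hli.span_eq_top_of_card_eq_finrank (by simp)
  have hcompl : IsCompl ({0} : Set (Fin 2)) {1} := by
    rw [isCompl_iff, disjoint_iff, codisjoint_iff]
    constructor <;> ext i <;> fin_cases i <;> simp
  simpa using hli.isCompl_span_image hspan hcompl

end Field

theorem im_smul_fst_mul_conj_smul_snd (c : ℂ) (v : ℂ × ℂ) :
    ((c • v).1 * conj (c • v).2).im = normSq c * (v.1 * conj v.2).im := by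
  rw [← im_ofReal_mul, normSq_eq_conj_mul_self]
  simp only [Prod.smul_fst, Prod.smul_snd, smul_eq_mul, map_mul]
  ring_nf

theorem im_mul_conj_pos_of_mem_span_singleton_mk_one {z : ℂ} (hz : 0 < z.im) {v : ℂ × ℂ}
    (hv : v ∈ ℂ ∙ ((z, 1) : ℂ × ℂ)) (hv0 : v ≠ 0) : 0 < (v.1 * conj v.2).im := by
  obtain ⟨c, rfl⟩ := mem_span_singleton.mp hv
  have hc : c ≠ 0 := by rintro rfl; simp at hv0
  rw [im_smul_fst_mul_conj_smul_snd]
  simpa using mul_pos (normSq_pos.mpr hc) hz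

theorem exists_im_pos_span_singleton_mk_one_eq {L : Submodule ℂ (ℂ × ℂ)}
    (hL : Module.finrank ℂ L = 1) (hpos : ∀ v ∈ L, v ≠ 0 → 0 < (v.1 * conj v.2).im) :
    ∃ z : ℂ, 0 < z.im ∧ ℂ ∙ ((z, 1) : ℂ × ℂ) = L := by
  have hL0 : L ≠ ⊥ := by rintro rfl; simp at hL
  obtain ⟨⟨a, b⟩, hvL, hv0⟩ := exists_mem_ne_zero_of_ne_bot hL0
  have him := hpos _ hvL hv0
  have hb : b ≠ 0 := by rintro rfl; simp at him
  have hab : ((a, b) : ℂ × ℂ) = b • ((a / b, 1) : ℂ × ℂ) := by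
    simp [mul_div_cancel₀ a hb]
  refine ⟨a / b, ?_, ?_⟩
  · rw [hab, im_smul_fst_mul_conj_smul_snd] at him
    simpa using pos_of_mul_pos_right him (normSq_nonneg b)
  · rw [eq_span_singleton_of_mem_of_finrank_eq_one hL hvL hv0,
      span_singleton_mk_eq_span_singleton_div_one hb]

/-- The map `z ↦ ℂ·(z,1)` is a bijection from the upper half plane onto the
set of one-dimensional `ℂ`-subspaces `L` of `ℂ²` such that every nonzero `(v₁, v₂) ∈ L`
satisfies `Im (v₁ * conj v₂) > 0`; moreover for `z ∈ ℍ` one has the internal direct sum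
decomposition `ℂ² = ℂ·(z,1) ⊕ ℂ·(conj z, 1)`. -/
theorem statement0 :
    Set.BijOn (fun z : ℂ => Submodule.span ℂ {((z, 1) : ℂ × ℂ)})
      {z : ℂ | 0 < z.im}
      {L : Submodule ℂ (ℂ × ℂ) | Module.finrank ℂ L = 1 ∧
        ∀ v ∈ L, v ≠ (0 : ℂ × ℂ) → 0 < (v.1 * (starRingEnd ℂ) v.2).im} ∧
    ∀ z : ℂ, 0 < z.im →
      IsCompl (Submodule.span ℂ {((z, 1) : ℂ × ℂ)})
        (Submodule.span ℂ {(((starRingEnd ℂ) z, 1) : ℂ × ℂ)}) := by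
  refine ⟨⟨?_, span_singleton_mk_one_injective.injOn, ?_⟩, ?_⟩
  · exact fun z hz => ⟨finrank_span_singleton (by simp),
      fun v hv hv0 => im_mul_conj_pos_of_mem_span_singleton_mk_one hz hv hv0⟩
  · rintro L ⟨hL, hpos⟩
    exact exists_im_pos_span_singleton_mk_one_eq hL hpos
  · intro z hz
    exact isCompl_span_singleton_mk_one fun h => hz.ne' (conj_eq_iff_im.mp h.symm)
end

section
/- Let E be a complex vector space and σ: E → E an ℝ-linear involution which is conjugate-linear, i.e. σ(σ(v)) = v and σ(c·v) = conj(c)·σ(v) for all c ∈ ℂ, v ∈ E. Let (W_{p,q})_{(p,q) ∈ ℤ×ℤ} be a family of complex subspaces of E such that E is the internal direct sum of the W_{p,q} and σ(W_{p,q}) = W_{q,p} for all p,q. For n ∈ ℤ set V_n = ⨁_{p+q=n} W_{p,q}, and for p ∈ ℤ set F^p = ⨁_{p'≥p, q ∈ ℤ} W_{p',q}. Then for all p,q ∈ ℤ one has W_{p,q} = V_{p+q} ∩ F^p ∩ σ(F^q). -/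
/-!
Decompose an element along the grading `W`. Membership in `V_{p+q}` and in `F^p` kills every
component `(a, b)` with `a + b ≠ p + q` or `a < p`. Since `σ` is additive and maps `W_{a,b}`
to `W_{b,a}`, it maps `F^q` into `⨆_{q ≤ b} W_{a,b}`, so membership in `σ(F^q)` also kills
the components with `b < q`. The only surviving index is `(p, q)`.
-/

theorem Submodule.map_mem_of_mem_iSup {R S M N ι : Type*} [Semiring R] [Semiring S]
    [AddCommMonoid M] [Module R M] [AddCommMonoid N] [Module S N]
    (f : M →+ N) {p : ι → Submodule R M} {q : Submodule S N}
    (hf : ∀ i, ∀ x ∈ p i, f x ∈ q) {x : M} (hx : x ∈ ⨆ i, p i) : f x ∈ q := by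
  induction hx using Submodule.iSup_induction' with
  | mem i x hx => exact hf i x hx
  | zero => simp
  | add x y _ _ hx hy => simpa using q.add_mem hx hy

namespace DirectSum

variable {ι M σ : Type*} [DecidableEq ι]

theorem mem_of_decompose_eq_zero_of_ne [AddCommMonoid M] [SetLike σ M]
    [AddSubmonoidClass σ M] (ℳ : ι → σ) [Decomposition ℳ] {x : M} {i : ι}
    (hx : ∀ j ≠ i, (decompose ℳ x j : M) = 0) : x ∈ ℳ i := by
  have hdec : decompose ℳ x = of (fun i ↦ ℳ i) i (decompose ℳ x i) := by
    refine DFinsupp.ext fun j ↦ ?_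
    by_cases hji : j = i
    · subst hji
      rw [of_eq_same]
    · rw [of_eq_of_ne _ _ _ hji]
      exact Subtype.ext (hx j hji)
  rw [← (decompose ℳ).symm_apply_apply x, hdec, decompose_symm_of]
  exact SetLike.coe_mem _

theorem decompose_eq_zero_of_mem_iSup {R : Type*} [Semiring R] [AddCommMonoid M] [Module R M]
    (ℳ : ι → Submodule R M) [Decomposition ℳ] {P : ι → Prop} {x : M}
    (hx : x ∈ ⨆ j : {j // P j}, ℳ j) {i : ι} (hi : ¬ P i) :
    (decompose ℳ x i : M) = 0 := by
  let component : M →+ M :=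
    { toFun y := (decompose ℳ y i : M)
      map_zero' := by simp
      map_add' := by simp }
  refine (Submodule.mem_bot R).mp (Submodule.map_mem_of_mem_iSup component ?_ hx)
  rintro ⟨j, hj⟩ y hy
  exact (Submodule.mem_bot R).mpr <| decompose_of_mem_ne ℳ hy (by rintro rfl; exact hi hj)

end DirectSum

theorem statement2_general {E : Type*} [AddCommGroup E] [Module ℂ E]
    (σ : E → E)
    (hσ_add : ∀ v w : E, σ (v + w) = σ v + σ w)
    (W : ℤ × ℤ → Submodule ℂ E)
    (hint : DirectSum.IsInternal W)
    (hconj : ∀ p q : ℤ, σ '' (W (p, q) : Set E) = (W (q, p) : Set E)) :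
    ∀ p q : ℤ,
      (W (p, q) : Set E) =
        ((⨆ pq : {w : ℤ × ℤ // w.1 + w.2 = p + q}, W pq.val : Submodule ℂ E) : Set E) ∩
          ((⨆ pq : {w : ℤ × ℤ // p ≤ w.1}, W pq.val : Submodule ℂ E) : Set E) ∩
          σ '' ((⨆ pq : {w : ℤ × ℤ // q ≤ w.1}, W pq.val : Submodule ℂ E) : Set E) := by
  have hσW : ∀ a b, ∀ x ∈ W (a, b), σ x ∈ W (b, a) := fun a b x hx ↦
    (hconj a b).subset ⟨x, hx, rfl⟩
  intro p q
  ext v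
  constructor
  · intro hv
    obtain ⟨w, hw, rfl⟩ : v ∈ σ '' W (q, p) := by rwa [hconj]
    exact ⟨⟨Submodule.mem_iSup_of_mem ⟨(p, q), rfl⟩ hv,
      Submodule.mem_iSup_of_mem ⟨(p, q), le_rfl⟩ hv⟩,
      w, Submodule.mem_iSup_of_mem ⟨(q, p), le_rfl⟩ hw, rfl⟩
  · rintro ⟨⟨hV, hF⟩, u, hu, rfl⟩
    let := hint.chooseDecomposition
    have hσu : σ u ∈ ⨆ w : {w : ℤ × ℤ // q ≤ w.2}, W w :=
      Submodule.map_mem_of_mem_iSup (AddMonoidHom.mk' σ hσ_add)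
        (fun ⟨(a, b), hb⟩ x hx ↦ Submodule.mem_iSup_of_mem ⟨(b, a), hb⟩ (hσW a b x hx)) hu
    refine DirectSum.mem_of_decompose_eq_zero_of_ne W fun ⟨a, b⟩ hab ↦ ?_
    by_cases hn : a + b = p + q
    · by_cases ha : p ≤ a
      · refine DirectSum.decompose_eq_zero_of_mem_iSup W hσu fun hb ↦ hab ?_
        exact Prod.ext (by omega) (by omega)
      · exact DirectSum.decompose_eq_zero_of_mem_iSup W hF ha
    · exact DirectSum.decompose_eq_zero_of_mem_iSup W hV hn

/-- Let `E` be a complex vector space and `σ : E → E` an ℝ-linear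
(i.e. additive) conjugate-linear involution.  Let `(W_{p,q})` be a family of complex
subspaces of `E` forming an internal direct sum decomposition of `E` with
`σ(W_{p,q}) = W_{q,p}`.  With `V_n = ⨁_{p+q=n} W_{p,q}` and `F^p = ⨁_{p'≥p,q} W_{p',q}`,
one has `W_{p,q} = V_{p+q} ∩ F^p ∩ σ(F^q)` for all `p, q`. -/
theorem statement2 {E : Type*} [AddCommGroup E] [Module ℂ E]
    (σ : E → E)
    (hσ_add : ∀ v w : E, σ (v + w) = σ v + σ w)
    (hσ_smul : ∀ (c : ℂ) (v : E), σ (c • v) = ((starRingEnd ℂ) c) • σ v)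
    (hσ_inv : ∀ v : E, σ (σ v) = v)
    (W : ℤ × ℤ → Submodule ℂ E)
    (hint : DirectSum.IsInternal W)
    (hconj : ∀ p q : ℤ, σ '' (W (p, q) : Set E) = (W (q, p) : Set E)) :
    ∀ p q : ℤ,
      (W (p, q) : Set E) =
        ((⨆ pq : {w : ℤ × ℤ // w.1 + w.2 = p + q}, W pq.val : Submodule ℂ E) : Set E) ∩
          ((⨆ pq : {w : ℤ × ℤ // p ≤ w.1}, W pq.val : Submodule ℂ E) : Set E) ∩
          σ '' ((⨆ pq : {w : ℤ × ℤ // q ≤ w.1}, W pq.val : Submodule ℂ E) : Set E) :=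
  statement2_general σ hσ_add W hint hconj
end

section
/- Let Γ be a subgroup of SL(2,ℂ) and let Γ' ≤ Γ be a subgroup of finite index. If the trace of every element of Γ' is an algebraic integer, then the trace of every element of Γ is an algebraic integer. -/
/-!
Write `λ, λ⁻¹` for the eigenvalues of `γ ∈ Γ`, so that `tr γ = λ + λ⁻¹` and
`tr γⁿ = λⁿ + λ⁻ⁿ`. Since `Γ'` has finite index, some power `γⁿ` with `n > 0` lies in `Γ'`, so `λⁿ + λ⁻ⁿ` is an algebraic
integer; then `λⁿ`, a root of `X² - (λⁿ + λ⁻ⁿ) X + 1`, is one too, hence so are `λ` and `λ⁻¹`,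
and therefore `tr γ = λ + λ⁻¹`.
-/

open Polynomial

section Integral

variable {R A : Type*} [CommRing R] [CommRing A] [Algebra R A] {x y : A}

theorem IsIntegral.of_add_of_mul_eq_one (hxy : x * y = 1) (h : IsIntegral R (x + y)) :
    IsIntegral R x := by
  nontriviality A
  have hroot : eval x (X ^ 2 - C (x + y) * X + 1) = 0 := by
    simp only [eval_add, eval_sub, eval_mul, eval_pow, eval_X, eval_C, eval_one]
    linear_combination -hxy
  refine .of_aeval_monic_of_isIntegral_coeff (by monicity!)
    (by rw [show (X ^ 2 - C (x + y) * X + 1 : A[X]).natDegree = 2 by compute_degree!]; decide)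
    (hroot ▸ isIntegral_zero) fun i ↦ ?_
  obtain _ | _ | _ | i := i <;>
    simp [coeff_X, coeff_one, coeff_X_pow, isIntegral_one, isIntegral_zero, -neg_add_rev, h.neg]

theorem IsIntegral.add_of_pow_add_pow (hxy : x * y = 1) {n : ℕ} (hn : 0 < n)
    (h : IsIntegral R (x ^ n + y ^ n)) : IsIntegral R (x + y) := by
  have hxyn : x ^ n * y ^ n = 1 := by rw [← mul_pow, hxy, one_pow]
  have hx := IsIntegral.of_add_of_mul_eq_one hxyn h
  have hy := IsIntegral.of_add_of_mul_eq_one ((mul_comm _ _).trans hxyn) (add_comm (x ^ n) _ ▸ h)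
  exact (hx.of_pow hn).add (hy.of_pow hn)

end Integral

theorem IsAlgClosed.exists_add_eq_and_mul_eq {K : Type*} [Field K] [IsAlgClosed K] (s p : K) :
    ∃ l m : K, l + m = s ∧ l * m = p := by
  obtain ⟨l, hl⟩ := IsAlgClosed.exists_root (X ^ 2 - C s * X + C p)
    (by rw [show (X ^ 2 - C s * X + C p : K[X]).degree = 2 by compute_degree!]; decide)
  refine ⟨l, s - l, by ring, ?_⟩
  simp only [IsRoot, eval_add, eval_sub, eval_mul, eval_pow, eval_X, eval_C] at hl
  linear_combination -hl

namespace Matrix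

variable {R : Type*} [CommRing R]

theorem pow_add_two_fin_two (M : Matrix (Fin 2) (Fin 2) R) (k : ℕ) :
    M ^ (k + 2) = M.trace • M ^ (k + 1) - M.det • M ^ k := by
  nontriviality R
  have hCH : M ^ 2 = M.trace • M - M.det • 1 := by
    have h0 : M ^ 2 - M.trace • M + M.det • 1 = 0 := by
      simpa [charpoly_fin_two, Algebra.smul_def] using M.aeval_self_charpoly
    rw [← sub_eq_zero, ← h0]
    abel
  rw [pow_add, hCH, mul_sub, Matrix.mul_smul, Matrix.mul_smul, mul_one, pow_succ]

theorem trace_pow_fin_two_eq_add_pow (M : Matrix (Fin 2) (Fin 2) R) {l m : R}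
    (hsum : l + m = M.trace) (hprod : l * m = M.det) (n : ℕ) :
    (M ^ n).trace = l ^ n + m ^ n := by
  induction n using Nat.twoStepInduction with
  | zero => simp [one_add_one_eq_two]
  | one => simp [hsum]
  | more k ih₀ ih₁ =>
    rw [pow_add_two_fin_two, trace_sub, trace_smul, trace_smul, ih₀, ih₁, ← hsum, ← hprod,
      smul_eq_mul, smul_eq_mul]
    ring

end Matrix

theorem statement7_general (Γ Γ' : Subgroup (Matrix.SpecialLinearGroup (Fin 2) ℂ))
    (hfin : Γ'.relIndex Γ ≠ 0)
    (h : ∀ γ ∈ Γ', IsIntegral ℤ (Matrix.trace (γ : Matrix (Fin 2) (Fin 2) ℂ))) :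
    ∀ γ ∈ Γ, IsIntegral ℤ (Matrix.trace (γ : Matrix (Fin 2) (Fin 2) ℂ)) := by
  intro γ hγ
  obtain ⟨n, hn, -, hγn⟩ := Subgroup.exists_pow_mem_of_relIndex_ne_zero hfin hγ
  obtain ⟨l, m, hsum, hprod⟩ := IsAlgClosed.exists_add_eq_and_mul_eq
    (γ : Matrix (Fin 2) (Fin 2) ℂ).trace 1
  have htrace := Matrix.trace_pow_fin_two_eq_add_pow _ hsum (hprod.trans γ.det_coe.symm) n
  rw [← hsum]
  refine IsIntegral.add_of_pow_add_pow hprod hn ?_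
  rw [← htrace, ← Matrix.SpecialLinearGroup.coe_pow]
  exact h _ hγn.1

/-- Let `Γ` be a subgroup of `SL(2,ℂ)` and `Γ' ≤ Γ` a subgroup of finite
index.  If the trace of every element of `Γ'` is an algebraic integer, then the trace
of every element of `Γ` is an algebraic integer. -/
theorem statement7 (Γ Γ' : Subgroup (Matrix.SpecialLinearGroup (Fin 2) ℂ))
    (hle : Γ' ≤ Γ) (hfin : Γ'.relIndex Γ ≠ 0)
    (h : ∀ γ ∈ Γ', IsIntegral ℤ (Matrix.trace (γ : Matrix (Fin 2) (Fin 2) ℂ))) :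
    ∀ γ ∈ Γ, IsIntegral ℤ (Matrix.trace (γ : Matrix (Fin 2) (Fin 2) ℂ)) :=
  statement7_general Γ Γ' hfin h
end

section
/- Let p be a prime number. Let Φ_p be the subgroup of SL(2,ℝ) generated by the set of matrices [[a,b],[c,d]] with a,b,c,d ∈ ℤ, ad − bc = 1 and p ∣ c, together with the single matrix [[0, −1/√p],[√p, 0]]. Then the subfield of ℝ generated over ℚ by the traces of all elements of Φ_p is exactly ℚ(√p). -/
/-- The group `SL(2,ℝ)`. -/
abbrev SL2R := Matrix.SpecialLinearGroup (Fin 2) ℝ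

/-- The preimage in `SL(2,ℝ)` of the Fricke group of level `p`: the subgroup generated
by the integral matrices `[[a,b],[c,d]]` of determinant one with `p ∣ c`, together with
the matrix `[[0, -1/√p],[√p, 0]]`. -/
def frickeGroup (p : ℕ) : Subgroup SL2R :=
  Subgroup.closure
    ({g : SL2R | ∃ a b c d : ℤ,
        a * d - b * c = 1 ∧ (p : ℤ) ∣ c ∧
        (g : Matrix (Fin 2) (Fin 2) ℝ) = !![(a : ℝ), (b : ℝ); (c : ℝ), (d : ℝ)]} ∪
      {g : SL2R | (g : Matrix (Fin 2) (Fin 2) ℝ) =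
        !![0, -(1 / Real.sqrt p); Real.sqrt p, 0]})

/-! The matrices in `SL(2,ℝ)` with entries in a subring form a subgroup (the inverse is the
adjugate), and all generators of the Fricke group have entries in `ℚ(√p)`; hence so do all its
traces. Conversely, the Fricke involution times `[[1,1],[0,1]]` has trace `√p`. -/

namespace Matrix.SpecialLinearGroup

variable {n R : Type*} [Fintype n] [DecidableEq n]

theorem mem_range_map_subtype_iff [CommRing R] (S : Subring R) (g : SpecialLinearGroup n R) :
    g ∈ (map S.subtype).range ↔ ∀ i j, (g : Matrix n n R) i j ∈ S := by
  refine ⟨?_, fun hg => ?_⟩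
  · rintro ⟨h, rfl⟩ i j
    exact (h i j).2
  · let M : Matrix n n S := fun i j => ⟨g i j, hg i j⟩
    have hM : M.det = 1 := S.subtype_injective <| by
      rw [RingHom.map_det, map_one]
      exact g.2
    exact ⟨⟨M, hM⟩, rfl⟩

theorem closure_le_range_map_subtype [CommRing R] (S : Subring R)
    {s : Set (SpecialLinearGroup n R)} (hs : ∀ g ∈ s, ∀ i j, (g : Matrix n n R) i j ∈ S) :
    Subgroup.closure s ≤ (map S.subtype).range :=
  (Subgroup.closure_le _).2 fun g hg => (mem_range_map_subtype_iff S g).2 (hs g hg)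

def traceField [Field R] (G : Subgroup (SpecialLinearGroup n R)) : Subfield R :=
  Subfield.closure {x | ∃ g ∈ G, trace (g : Matrix n n R) = x}

theorem traceField_le [Field R] {G : Subgroup (SpecialLinearGroup n R)} {K : Subfield R}
    (hG : G ≤ (map K.toSubring.subtype).range) : traceField G ≤ K := by
  rw [traceField, Subfield.closure_le]
  rintro _ ⟨g, hg, rfl⟩
  exact K.sum_mem fun i _ => (mem_range_map_subtype_iff _ g).1 (hG hg) i i

end Matrix.SpecialLinearGroup

open Matrix.SpecialLinearGroup

theorem frickeGroup_le_range_map_subtype (p : ℕ) :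
    frickeGroup p ≤ (map (Subfield.closure {√(p : ℝ)}).toSubring.subtype).range := by
  set K := Subfield.closure {√(p : ℝ)}
  have hsqrt : √(p : ℝ) ∈ K := Subfield.subset_closure rfl
  refine closure_le_range_map_subtype _ ?_
  rintro g (⟨a, b, c, d, -, -, hg⟩ | hg) i j <;> rw [hg] <;> fin_cases i <;> fin_cases j <;>
    simp [K.inv_mem, hsqrt]

theorem exists_mem_frickeGroup_trace_eq_sqrt {p : ℕ} (hp : 0 < p) :
    ∃ g ∈ frickeGroup p, Matrix.trace (g : Matrix (Fin 2) (Fin 2) ℝ) = √(p : ℝ) := by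
  have hsqrt : √(p : ℝ) ≠ 0 := by positivity
  let W : SL2R :=
    ⟨!![0, -(1 / √(p : ℝ)); √(p : ℝ), 0], by simp [Matrix.det_fin_two_of, hsqrt]⟩
  let T : SL2R := ⟨!![1, 1; 0, 1], by simp [Matrix.det_fin_two_of]⟩
  have hW : W ∈ frickeGroup p := Subgroup.subset_closure (Or.inr rfl)
  have hT : T ∈ frickeGroup p :=
    Subgroup.subset_closure (Or.inl ⟨1, 1, 0, 1, by norm_num, dvd_zero _, by simp [T]⟩)
  refine ⟨W * T, mul_mem hW hT, ?_⟩
  rw [coe_mul, Matrix.trace_fin_two]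
  simp [W, T]

/-- For a prime `p`, the subfield of `ℝ` generated over `ℚ` by the traces
of all elements of the Fricke group of level `p` is exactly `ℚ(√p)`. -/
theorem statement9 (p : ℕ) (hp : p.Prime) :
    Subfield.closure
        {x : ℝ | ∃ g ∈ frickeGroup p, Matrix.trace (g : Matrix (Fin 2) (Fin 2) ℝ) = x} =
      Subfield.closure {Real.sqrt p} := by
  change traceField (frickeGroup p) = _
  refine le_antisymm (traceField_le (frickeGroup_le_range_map_subtype p)) ?_
  obtain ⟨g, hg, htrace⟩ := exists_mem_frickeGroup_trace_eq_sqrt hp.pos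
  exact Subfield.closure_le.2 <|
    Set.singleton_subset_iff.2 (Subfield.subset_closure ⟨g, hg, htrace⟩)
end
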